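/- Let q ∈ ℂ with 0 < |q| < 1, let x ∈ ℂ with x ≠ 0, and let y ∈ ℂ be such that y ≠ q^n for every n ∈ ℤ. Then s(x, qy; q) = −(x·y/q)·s(x, y; q) − (x/q)·ϑ(x; q). (This is the elliptic transformation of the Appell–Lerch numerator in the second variable.) -/

import Mathlib

/-!
With `θₙ = (-x)ⁿ q^{n(n-1)/2}` one has `θₙ₊₁ = -x qⁿ θₙ`, so the `(n + 1)`-st term of `s(x, qy; q)`
is `-(x/q) θₙ qⁿ / (qⁿ - y)`; writing `qⁿ / (qⁿ - y) = 1 + y / (qⁿ - y)` splits it into the `n`-th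
terms of `s(x, y; q)` and `ϑ(x; q)`, and the identity follows by shifting the summation index.
The theta series converges by the ratio test in both directions (`-x qⁿ → 0` as `n → ∞`,
`→ ∞` as `n → -∞`), and `s` is dominated by theta series since
`|qⁿ - y|⁻¹ ≤ 2 |q|⁻ⁿ + 2 |y|⁻¹` for all but finitely many `n`.
-/

open Filter Topology

/-- The theta function `ϑ(x;q) := Σ_{n∈ℤ} (−x)^n q^{n(n−1)/2}`. -/
noncomputable def theta (q x : ℂ) : ℂ := ∑' n : ℤ, (-x) ^ n * q ^ (n * (n - 1) / 2)

/-- `s(x,y;q) := Σ_{n∈ℤ} q^{n(n−1)/2}·(−x)^n / (q^n − y)`. -/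
noncomputable def appellS (q x y : ℂ) : ℂ :=
  ∑' n : ℤ, q ^ (n * (n - 1) / 2) * (-x) ^ n / (q ^ n - y)

section ZpowLimits

variable {r : ℝ}

theorem tendsto_zpow_atTop_nhds_zero_of_lt_one (h0 : 0 < r) (h1 : r < 1) :
    Tendsto (fun n : ℤ => r ^ n) atTop (𝓝 0) := by
  rw [← Nat.map_cast_int_atTop, tendsto_map'_iff]
  simpa [Function.comp_def] using tendsto_pow_atTop_nhds_zero_of_lt_one h0.le h1

theorem tendsto_zpow_atBot_atTop_of_lt_one (h0 : 0 < r) (h1 : r < 1) :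
    Tendsto (fun n : ℤ => r ^ n) atBot atTop := by
  rw [← map_neg_atTop, ← Nat.map_cast_int_atTop, map_map, tendsto_map'_iff]
  simpa [Function.comp_def, zpow_neg, inv_pow] using
    tendsto_pow_atTop_atTop_of_one_lt ((one_lt_inv₀ h0).2 h1)

end ZpowLimits

theorem summable_int_of_norm_add_one_eq_mul {E : Type*} [NormedAddCommGroup E] [CompleteSpace E]
    {f : ℤ → E} {c : ℤ → ℝ} (hf : ∀ n, ‖f (n + 1)‖ = c n * ‖f n‖)
    (htop : Tendsto c atTop (𝓝 0)) (hbot : Tendsto c atBot atTop) : Summable f := by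
  refine .of_nat_of_neg (summable_of_ratio_norm_eventually_le (r := 2⁻¹) (by norm_num) ?_)
    (summable_of_ratio_norm_eventually_le (r := 2⁻¹) (by norm_num) ?_)
  · filter_upwards [tendsto_natCast_atTop_atTop.eventually
      (htop.eventually_le_const (by norm_num : (0 : ℝ) < 2⁻¹))] with n hn
    rw [Nat.cast_succ, hf]
    exact mul_le_mul_of_nonneg_right hn (norm_nonneg _)
  · have hneg : Tendsto (fun n : ℕ => -(n : ℤ) - 1) atTop atBot :=
      tendsto_atBot_add_const_right _ _ (tendsto_neg_atTop_atBot.comp tendsto_natCast_atTop_atTop)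
    filter_upwards [hneg.eventually (hbot.eventually_ge_atTop 2)] with n hn
    have h := hf (-(n : ℤ) - 1)
    rw [sub_add_cancel] at h
    rw [Nat.cast_succ, neg_add', h]
    nlinarith [norm_nonneg (f (-(n : ℤ) - 1))]

theorem Int.mul_sub_one_ediv_two_add_one (n : ℤ) :
    (n + 1) * (n + 1 - 1) / 2 = n * (n - 1) / 2 + n := by
  rw [show (n + 1) * (n + 1 - 1) = n * (n - 1) + n * 2 by ring,
    Int.add_mul_ediv_right _ _ two_ne_zero]

section Terms

variable {q x y : ℂ}

noncomputable def thetaTerm (q x : ℂ) (n : ℤ) : ℂ := (-x) ^ n * q ^ (n * (n - 1) / 2)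

noncomputable def appellTerm (q x y : ℂ) (n : ℤ) : ℂ :=
  q ^ (n * (n - 1) / 2) * (-x) ^ n / (q ^ n - y)

theorem appellTerm_eq_thetaTerm_div (q x y : ℂ) (n : ℤ) :
    appellTerm q x y n = thetaTerm q x n / (q ^ n - y) := by
  rw [appellTerm, thetaTerm, mul_comm]

theorem thetaTerm_div (q x : ℂ) (n : ℤ) : thetaTerm q (x / q) n = thetaTerm q x n / q ^ n := by
  rw [thetaTerm, thetaTerm, ← neg_div, div_zpow]
  ring

theorem thetaTerm_add_one (hq : q ≠ 0) (hx : x ≠ 0) (n : ℤ) :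
    thetaTerm q x (n + 1) = -x * q ^ n * thetaTerm q x n := by
  rw [thetaTerm, thetaTerm, Int.mul_sub_one_ediv_two_add_one, zpow_add₀ hq,
    zpow_add_one₀ (neg_ne_zero.2 hx)]
  ring

theorem appellTerm_mul_add_one (hq : q ≠ 0) (hx : x ≠ 0) {n : ℤ} (hy : y ≠ q ^ n) :
    appellTerm q x (q * y) (n + 1) =
      -(x * y / q) * appellTerm q x y n - (x / q) * thetaTerm q x n := by
  have hqy : q ^ n - y ≠ 0 := sub_ne_zero.2 hy.symm
  rw [appellTerm_eq_thetaTerm_div, appellTerm_eq_thetaTerm_div, thetaTerm_add_one hq hx,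
    zpow_add_one₀ hq, show q ^ n * q - q * y = q * (q ^ n - y) by ring]
  field_simp
  ring

theorem summable_thetaTerm (hq0 : 0 < ‖q‖) (hq1 : ‖q‖ < 1) (hx : x ≠ 0) :
    Summable (thetaTerm q x) := by
  refine summable_int_of_norm_add_one_eq_mul (c := fun n => ‖x‖ * ‖q‖ ^ n) (fun n => ?_) ?_ ?_
  · rw [thetaTerm_add_one (norm_pos_iff.1 hq0) hx, norm_mul, norm_mul, norm_neg, norm_zpow]
  · simpa using (tendsto_zpow_atTop_nhds_zero_of_lt_one hq0 hq1).const_mul ‖x‖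
  · exact (tendsto_zpow_atBot_atTop_of_lt_one hq0 hq1).const_mul_atTop (norm_pos_iff.2 hx)

theorem inv_norm_sub_le {E : Type*} [NormedAddCommGroup E] {a b : E} (ha : a ≠ 0)
    (h : 2 * ‖b‖ ≤ ‖a‖ ∨ ‖a‖ ≤ ‖b‖ / 2) : ‖a - b‖⁻¹ ≤ 2 * ‖a‖⁻¹ + 2 * ‖b‖⁻¹ := by
  have ha' := norm_pos_iff.2 ha
  have hab := norm_sub_norm_le a b
  have hba := norm_sub_norm_le b a
  rw [norm_sub_rev] at hba
  rcases h with h | h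
  · calc ‖a - b‖⁻¹ ≤ (‖a‖ / 2)⁻¹ := inv_anti₀ (by positivity) (by linarith)
      _ ≤ 2 * ‖a‖⁻¹ + 2 * ‖b‖⁻¹ := by
        rw [inv_div, div_eq_mul_inv]; exact le_add_of_nonneg_right (by positivity)
  · calc ‖a - b‖⁻¹ ≤ (‖b‖ / 2)⁻¹ := inv_anti₀ (by linarith) (by linarith)
      _ ≤ 2 * ‖a‖⁻¹ + 2 * ‖b‖⁻¹ := by
        rw [inv_div, div_eq_mul_inv]; exact le_add_of_nonneg_left (by positivity)

theorem eventually_norm_zpow_far_from (hq0 : 0 < ‖q‖) (hq1 : ‖q‖ < 1) (y : ℂ) :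
    ∀ᶠ n : ℤ in cofinite, 2 * ‖y‖ ≤ ‖q ^ n‖ ∨ ‖q ^ n‖ ≤ ‖y‖ / 2 := by
  simp only [norm_zpow]
  rw [Int.cofinite_eq, eventually_sup]
  refine ⟨((tendsto_zpow_atBot_atTop_of_lt_one hq0 hq1).eventually_ge_atTop _).mono
    fun _ => Or.inl, ?_⟩
  rcases eq_or_ne y 0 with rfl | hy
  · exact Eventually.of_forall fun n => Or.inl (by simp [zpow_nonneg (norm_nonneg q)])
  · exact ((tendsto_zpow_atTop_nhds_zero_of_lt_one hq0 hq1).eventually_le_const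
      (by positivity)).mono fun _ => Or.inr

theorem summable_appellTerm (hq0 : 0 < ‖q‖) (hq1 : ‖q‖ < 1) (hx : x ≠ 0) (y : ℂ) :
    Summable (appellTerm q x y) := by
  have hq := norm_pos_iff.1 hq0
  refine .of_norm_bounded_eventually
    (g := fun n => 2 * ‖thetaTerm q (x / q) n‖ + 2 * ‖y‖⁻¹ * ‖thetaTerm q x n‖)
    (((summable_thetaTerm hq0 hq1 (div_ne_zero hx hq)).norm.mul_left 2).add
      ((summable_thetaTerm hq0 hq1 hx).norm.mul_left _)) ?_
  filter_upwards [eventually_norm_zpow_far_from hq0 hq1 y] with n hn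
  calc ‖appellTerm q x y n‖ = ‖thetaTerm q x n‖ * ‖q ^ n - y‖⁻¹ := by
        rw [appellTerm_eq_thetaTerm_div, norm_div, div_eq_mul_inv]
    _ ≤ ‖thetaTerm q x n‖ * (2 * ‖q ^ n‖⁻¹ + 2 * ‖y‖⁻¹) :=
        mul_le_mul_of_nonneg_left (inv_norm_sub_le (zpow_ne_zero n hq) hn) (norm_nonneg _)
    _ = 2 * ‖thetaTerm q (x / q) n‖ + 2 * ‖y‖⁻¹ * ‖thetaTerm q x n‖ := by
        rw [thetaTerm_div, norm_div]
        ring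

end Terms

/-- Elliptic transformation in the second variable:
`s(x, qy; q) = −(x·y/q)·s(x, y; q) − (x/q)·ϑ(x; q)` for `0 < |q| < 1`, `x ≠ 0`,
`y ∉ q^ℤ`. -/
theorem appell_lerch_second_variable (q x y : ℂ)
    (hq0 : 0 < ‖q‖) (hq1 : ‖q‖ < 1)
    (hx : x ≠ 0) (hy : ∀ n : ℤ, y ≠ q ^ n) :
    appellS q x (q * y) = -(x * y / q) * appellS q x y - (x / q) * theta q x := by
  have hq : q ≠ 0 := norm_pos_iff.1 hq0
  calc appellS q x (q * y) = ∑' n : ℤ, appellTerm q x (q * y) (n + 1) :=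
        ((Equiv.addRight 1).tsum_eq (appellTerm q x (q * y))).symm
    _ = ∑' n : ℤ, (-(x * y / q) * appellTerm q x y n - (x / q) * thetaTerm q x n) :=
        tsum_congr fun n => appellTerm_mul_add_one hq hx (hy n)
    _ = -(x * y / q) * appellS q x y - (x / q) * theta q x := by
        rw [Summable.tsum_sub ((summable_appellTerm hq0 hq1 hx y).mul_left _)
          ((summable_thetaTerm hq0 hq1 hx).mul_left _), tsum_mul_left, tsum_mul_left]
        rfl
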